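/- Let A be an n×n real matrix, λ > 0, and P an n×n symmetric positive definite matrix with AᵀP + PA + 2λP ⪯ 0. Let d : [0,∞) → ℝⁿ be continuous with d(t) → 0 as t → ∞. If z : [0,∞) → ℝⁿ is differentiable with ż(t) = A z(t) + d(t) for all t ≥ 0, then z(t) → 0 as t → ∞. -/

import Mathlib

open Matrix Filter Real Topology

noncomputable section

/-- `M ⪯ 0`: a real matrix is negative semidefinite iff `-M` is positive semidefinite. -/
def Matrix.NegSemidef {n : Type*} [Fintype n] (M : Matrix n n ℝ) : Prop := (-M).PosSemidef

/-- `M ≺ 0`: a real matrix is negative definite iff `-M` is positive definite. -/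
def Matrix.NegDef {n : Type*} [Fintype n] (M : Matrix n n ℝ) : Prop := (-M).PosDef

/-!
Factor `P = BᵀB` with `B` invertible and measure the state in the equivalent norm `‖B z‖`, in
which the matrix inequality reads `⟪B y, B (A y)⟫ ≤ -λ ‖B y‖²`. Along a solution,
`V = ‖B z‖²` then satisfies `V' ≤ -λ V + ‖B d‖² / λ` (Cauchy–Schwarz and AM-GM on the input
term), and Grönwall's inequality with the negative rate `-λ` shows that `V` eventually stays
below any positive level, because the forcing term `‖B d‖² / λ` becomes arbitrarily small.
-/

theorem tendsto_gronwallBound_atTop_of_neg {δ K ε : ℝ} (hK : K < 0) :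
    Tendsto (gronwallBound δ K ε) atTop (𝓝 (-(ε / K))) := by
  have hexp : Tendsto (fun x => exp (K * x)) atTop (𝓝 0) :=
    tendsto_exp_atBot.comp (tendsto_id.const_mul_atTop_of_neg hK)
  rw [gronwallBound_of_K_ne_0 hK.ne]
  convert (hexp.const_mul δ).add ((hexp.sub_const 1).const_mul (ε / K)) using 2
  ring

theorem tendsto_zero_of_hasDerivAt_le_neg_mul_add {V V' h : ℝ → ℝ} {c : ℝ} (hc : 0 < c)
    (hV : ∀ t, 0 ≤ t → HasDerivAt V (V' t) t) (hV' : ∀ t, 0 ≤ t → V' t ≤ -c * V t + h t)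
    (hh : Tendsto h atTop (𝓝 0)) (hV0 : ∀ t, 0 ≤ V t) : Tendsto V atTop (𝓝 0) := by
  refine tendsto_order.2 ⟨fun b hb => .of_forall fun t => hb.trans_le (hV0 t), fun ε hε => ?_⟩
  obtain ⟨a, ha⟩ := eventually_atTop.1
    ((hh.eventually_le_const (by positivity : 0 < c * ε / 2)).and (eventually_ge_atTop 0))
  have ha0 : 0 ≤ a := (ha a le_rfl).2
  have hbound : ∀ t, a ≤ t → V t ≤ gronwallBound (V a) (-c) (c * ε / 2) (t - a) := by
    intro t hat
    refine le_gronwallBound_of_liminf_deriv_right_le (f' := V')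
      (fun s hs => (hV s (ha0.trans hs.1)).continuousAt.continuousWithinAt)
      (fun s hs r hr => ?_) le_rfl (fun s hs => ?_) t ⟨hat, le_rfl⟩
    · simpa [slope_def_field, div_eq_inv_mul] using
        (hV s (ha0.trans hs.1)).hasDerivWithinAt.liminf_right_slope_le hr
    · linarith [hV' s (ha0.trans hs.1), (ha s hs.1).1]
  have hlim :
      Tendsto (fun t => gronwallBound (V a) (-c) (c * ε / 2) (t - a)) atTop (𝓝 (ε / 2)) := by
    have h := (tendsto_gronwallBound_atTop_of_neg (δ := V a) (ε := c * ε / 2)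
      (neg_neg_of_pos hc)).comp (tendsto_atTop_add_const_right atTop (-a) tendsto_id)
    rwa [show -(c * ε / 2 / -c) = ε / 2 by field_simp] at h
  filter_upwards [eventually_ge_atTop a, hlim.eventually (gt_mem_nhds (half_lt_self hε))]
    with t hat hlt
  exact (hbound t hat).trans_lt hlt

theorem two_mul_mul_le_mul_sq_add_sq_div {a b c : ℝ} (hc : 0 < c) :
    2 * a * b ≤ c * a ^ 2 + b ^ 2 / c := by
  have h : 0 ≤ (c * a - b) ^ 2 / c := by positivity
  have h' : (c * a - b) ^ 2 / c = c * a ^ 2 + b ^ 2 / c - 2 * a * b := by field_simp; ring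
  linarith

theorem tendsto_zero_of_hasDerivAt_of_inner_le {E F : Type*} [NormedAddCommGroup E]
    [NormedSpace ℝ E] [NormedAddCommGroup F] [InnerProductSpace ℝ F] (T : E ≃L[ℝ] F)
    {L : E → E} {c : ℝ} (hc : 0 < c) (hL : ∀ y, inner ℝ (T y) (T (L y)) ≤ -c * ‖T y‖ ^ 2)
    {z d : ℝ → E} (hz : ∀ t, 0 ≤ t → HasDerivAt z (L (z t) + d t) t)
    (hd : Tendsto d atTop (𝓝 0)) : Tendsto z atTop (𝓝 0) := by
  have hTz : ∀ t, 0 ≤ t → HasDerivAt (fun s => T (z s)) (T (L (z t)) + T (d t)) t :=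
    fun t ht => by
      simpa [Function.comp_def] using (T : E →L[ℝ] F).hasFDerivAt.comp_hasDerivAt t (hz t ht)
  have hTd : Tendsto (fun t => ‖T (d t)‖ ^ 2 / c) atTop (𝓝 0) := by
    simpa using (((T.continuous.tendsto 0).comp hd).norm.pow 2).div_const c
  have hV : Tendsto (fun t => ‖T (z t)‖ ^ 2) atTop (𝓝 0) := by
    refine tendsto_zero_of_hasDerivAt_le_neg_mul_add hc (fun t ht => (hTz t ht).norm_sq)
      (fun t _ => ?_) hTd fun t => sq_nonneg _
    have hCS := real_inner_le_norm (T (z t)) (T (d t))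
    have hAMGM := two_mul_mul_le_mul_sq_add_sq_div (a := ‖T (z t)‖) (b := ‖T (d t)‖) hc
    rw [inner_add_right]
    linarith [hL (z t)]
  have hTz0 : Tendsto (fun t => T (z t)) atTop (𝓝 0) := by
    rw [tendsto_zero_iff_norm_tendsto_zero]
    simpa using hV.sqrt
  simpa [Function.comp_def] using (T.symm.continuous.tendsto 0).comp hTz0

theorem Matrix.NegSemidef.dotProduct_mulVec_mulVec_le {n : Type*} [Fintype n] {A P : Matrix n n ℝ}
    {lam : ℝ} (hP : P.IsSymm) (h : (Aᵀ * P + P * A + (2 * lam) • P).NegSemidef) (x : n → ℝ) :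
    x ⬝ᵥ P *ᵥ (A *ᵥ x) ≤ -lam * (x ⬝ᵥ P *ᵥ x) := by
  rw [mulVec_mulVec]
  have hsymm : x ⬝ᵥ (Aᵀ * P) *ᵥ x = x ⬝ᵥ (P * A) *ᵥ x := by
    rw [← mulVec_mulVec, ← mulVec_mulVec, dotProduct_mulVec x Aᵀ, vecMul_transpose,
      dotProduct_mulVec x P, ← mulVec_transpose, hP.eq, dotProduct_comm]
  have := h.dotProduct_mulVec_nonneg x
  simp only [star_trivial, neg_mulVec, add_mulVec, smul_mulVec, dotProduct_neg, dotProduct_add,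
    dotProduct_smul, smul_eq_mul, hsymm] at this
  linarith

theorem EuclideanSpace.inner_toLp_mulVec_toLp_mulVec {n : Type*} [Fintype n] (B : Matrix n n ℝ)
    (x y : n → ℝ) :
    inner ℝ (WithLp.toLp 2 (B *ᵥ x)) (WithLp.toLp 2 (B *ᵥ y)) = x ⬝ᵥ (Bᵀ * B) *ᵥ y := by
  rw [EuclideanSpace.inner_eq_star_dotProduct, star_trivial, dotProduct_comm, ← mulVec_mulVec,
    dotProduct_mulVec x Bᵀ, vecMul_transpose]

open scoped MatrixOrder in
theorem Matrix.PosDef.exists_isUnit_eq_transpose_mul_self {n : Type*} [Fintype n] [DecidableEq n]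
    {P : Matrix n n ℝ} (hP : P.PosDef) : ∃ B, IsUnit B ∧ P = Bᵀ * B := by
  simpa [star_eq_conjTranspose] using
    CStarAlgebra.isStrictlyPositive_iff_eq_star_mul_self.mp hP.isStrictlyPositive

theorem stmt_10 (n : ℕ)
    (A : Matrix (Fin n) (Fin n) ℝ) (lam : ℝ) (hlam : 0 < lam)
    (P : Matrix (Fin n) (Fin n) ℝ) (hP : P.PosDef)
    (hLMI : (Aᵀ * P + P * A + (2 * lam) • P).NegSemidef)
    (d : ℝ → EuclideanSpace ℝ (Fin n))
    (hd0 : Tendsto d atTop (nhds 0))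
    (z : ℝ → EuclideanSpace ℝ (Fin n))
    (hz : ∀ t, 0 ≤ t → HasDerivAt z ((WithLp.equiv 2 (Fin n → ℝ)).symm (A.mulVec (z t)) + d t) t) :
    Tendsto z atTop (nhds 0) := by
  obtain ⟨B, hB, rfl⟩ := hP.exists_isUnit_eq_transpose_mul_self
  let T := ContinuousLinearEquiv.unitsEquiv ℝ _ (hB.map (toEuclideanCLM (𝕜 := ℝ))).unit
  have hT : ∀ x, T x = WithLp.toLp 2 (B *ᵥ x) := fun x => toEuclideanCLM_toLp B x
  refine tendsto_zero_of_hasDerivAt_of_inner_le T hlam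
    (L := fun x => (WithLp.equiv 2 (Fin n → ℝ)).symm (A *ᵥ x)) (fun y => ?_) hz hd0
  rw [← real_inner_self_eq_norm_sq, hT, hT, WithLp.equiv_symm_apply, WithLp.ofLp_toLp,
    EuclideanSpace.inner_toLp_mulVec_toLp_mulVec, EuclideanSpace.inner_toLp_mulVec_toLp_mulVec]
  exact hLMI.dotProduct_mulVec_mulVec_le (isSymm_transpose_mul_self B) y
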